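/- arXiv:2106.00252 — 2 statements merged into one kernel-verified Lean document; each statement's English description precedes it below -/
import Mathlib

section
/- Under the log-loss, the minimum excess risk for Bayesian learning equals the conditional mutual information: MER_log = R_log(Y|X,Z) − R_log(Y|X,W) = H(Y|X,Z) − H(Y|X,W) = I(Y; W | X, Z), provided Y is conditionally independent of Z given (X, W). -/
open scoped BigOperators

/-- Distribution (pushforward) of a random variable `X` under weights `p`. -/
noncomputable def distOf {Ω α : Type*} [Fintype Ω] [DecidableEq α]
    (p : Ω → ℝ) (X : Ω → α) (a : α) : ℝ :=
  ∑ ω, if X ω = a then p ω else 0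

/-- Shannon entropy of a random variable. -/
noncomputable def entOf {Ω α : Type*} [Fintype Ω] [Fintype α] [DecidableEq α]
    (p : Ω → ℝ) (X : Ω → α) : ℝ :=
  -∑ a, distOf p X a * Real.log (distOf p X a)

/-- Conditional entropy H(Y|X). -/
noncomputable def condEntOf {Ω α β : Type*} [Fintype Ω] [Fintype α] [Fintype β]
    [DecidableEq α] [DecidableEq β] (p : Ω → ℝ) (Y : Ω → β) (X : Ω → α) : ℝ :=
  entOf p (fun ω => (Y ω, X ω)) - entOf p X

/-- Mutual information I(A;B). -/
noncomputable def miOf {Ω α β : Type*} [Fintype Ω] [Fintype α] [Fintype β]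
    [DecidableEq α] [DecidableEq β] (p : Ω → ℝ) (A : Ω → α) (B : Ω → β) : ℝ :=
  entOf p A + entOf p B - entOf p (fun ω => (A ω, B ω))

/-- Conditional mutual information I(A;B|C). -/
noncomputable def cmiOf {Ω α β γ : Type*} [Fintype Ω] [Fintype α] [Fintype β] [Fintype γ]
    [DecidableEq α] [DecidableEq β] [DecidableEq γ]
    (p : Ω → ℝ) (A : Ω → α) (B : Ω → β) (C : Ω → γ) : ℝ :=
  condEntOf p A C - condEntOf p A (fun ω => (B ω, C ω))

/-- `p` is a probability mass function on the finite sample space. -/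
def IsPMF {Ω : Type*} [Fintype Ω] (p : Ω → ℝ) : Prop :=
  (∀ ω, 0 ≤ p ω) ∧ ∑ ω, p ω = 1

/-- A and B are conditionally independent given C. -/
def CondIndep {Ω α β γ : Type*} [Fintype Ω] [DecidableEq α] [DecidableEq β] [DecidableEq γ]
    (p : Ω → ℝ) (A : Ω → α) (B : Ω → β) (C : Ω → γ) : Prop :=
  ∀ a b c, distOf p (fun ω => (A ω, B ω, C ω)) (a, b, c) * distOf p C c =
    distOf p (fun ω => (A ω, C ω)) (a, c) * distOf p (fun ω => (B ω, C ω)) (b, c)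

/-- Equality in distribution. -/
def IdentDist {Ω α : Type*} [Fintype Ω] [DecidableEq α]
    (p : Ω → ℝ) (X Y : Ω → α) : Prop := ∀ a, distOf p X a = distOf p Y a

/-- Bayesian risk: infimum over measurable (automatic here) decision rules of the
expected loss. -/
noncomputable def risk {Ω α 𝒞 𝒜 : Type*} [Fintype Ω]
    (p : Ω → ℝ) (ℓ : 𝒞 → 𝒜 → ℝ) (C : Ω → 𝒞) (A : Ω → α) : ℝ :=
  ⨅ ψ : α → 𝒜, ∑ ω, p ω * ℓ (C ω) (ψ (A ω))

/-- The action space for the log-loss: (strictly positive) probability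
distributions on the finite label set `𝒴`. -/
def PDist (𝒴 : Type*) [Fintype 𝒴] : Type _ :=
  {q : 𝒴 → ℝ // (∀ y, 0 < q y) ∧ ∑ y, q y = 1}

/-- Bayesian risk under the log-loss ℓ(y,q) = −log q(y). -/
noncomputable def riskLog {Ω α 𝒴 : Type*} [Fintype Ω] [Fintype 𝒴]
    (p : Ω → ℝ) (Y : Ω → 𝒴) (A : Ω → α) : ℝ :=
  ⨅ ψ : α → PDist 𝒴, ∑ ω, p ω * (-Real.log ((ψ (A ω)).1 (Y ω)))

section Aux
variable {Ω α β 𝒴 : Type*} [Fintype Ω]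

lemma sum_distOf_mul [Fintype α] [DecidableEq α] (p : Ω → ℝ) (T : Ω → α) (g : α → ℝ) :
    ∑ a, distOf p T a * g a = ∑ ω, p ω * g (T ω) := by
  simp only [distOf, Finset.sum_mul]
  rw [Finset.sum_comm]
  refine Finset.sum_congr rfl fun ω _ => ?_
  simp [ite_mul, Finset.sum_ite_eq]

lemma sum_distOf_pair [Fintype α] [Fintype 𝒴] [DecidableEq α] [DecidableEq 𝒴]
    (p : Ω → ℝ) (Y : Ω → 𝒴) (A : Ω → α) (a : α) :
    ∑ y, distOf p (fun ω => (Y ω, A ω)) (y, a) = distOf p A a := by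
  simp only [distOf]
  rw [Finset.sum_comm]
  refine Finset.sum_congr rfl fun ω _ => ?_
  by_cases h : A ω = a <;> simp [Prod.ext_iff, h, ite_and, Finset.sum_ite_eq]

lemma distOf_le [DecidableEq α] [DecidableEq β] (p : Ω → ℝ) (hp0 : ∀ ω, 0 ≤ p ω)
    (T : Ω → α) (S : Ω → β) (g : α → β) (hg : ∀ ω, S ω = g (T ω)) (a : α) :
    distOf p T a ≤ distOf p S (g a) := by
  refine Finset.sum_le_sum fun ω _ => ?_
  by_cases h : T ω = a
  · rw [if_pos h, if_pos (by rw [hg ω, h])]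
  · rw [if_neg h]
    split_ifs
    · exact hp0 ω
    · exact le_rfl

lemma distOf_congr [DecidableEq α] [DecidableEq β] (p : Ω → ℝ) {f : Ω → α} {g : Ω → β}
    {a : α} {b : β} (h : ∀ ω, (f ω = a ↔ g ω = b)) : distOf p f a = distOf p g b :=
  Finset.sum_congr rfl fun ω _ => by rw [if_congr (h ω) rfl rfl]

lemma condEnt_eq_sum [Fintype α] [Fintype 𝒴] [DecidableEq α] [DecidableEq 𝒴]
    (p : Ω → ℝ) (Y : Ω → 𝒴) (A : Ω → α) :
    condEntOf p Y A = ∑ ω, p ω *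
      (Real.log (distOf p A (A ω)) -
        Real.log (distOf p (fun ω => (Y ω, A ω)) (Y ω, A ω))) := by
  have h1 := sum_distOf_mul p (fun ω => (Y ω, A ω))
    (fun v => Real.log (distOf p (fun ω => (Y ω, A ω)) v))
  have h2 := sum_distOf_mul p A (fun a => Real.log (distOf p A a))
  simp only [condEntOf, entOf]
  rw [h1, h2]
  simp only [mul_sub]
  rw [Finset.sum_sub_distrib]
  ring

end Aux

section Risk
variable {Ω α 𝒴 : Type*} [Fintype Ω] [Fintype α] [Fintype 𝒴]
  [DecidableEq α] [DecidableEq 𝒴] [Nonempty 𝒴]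

lemma riskLog_eq_condEnt (p : Ω → ℝ) (hp : IsPMF p) (Y : Ω → 𝒴) (A : Ω → α)
    (hr : ∀ y a, 0 < distOf p (fun ω => (Y ω, A ω)) (y, a)) :
    riskLog p Y A = condEntOf p Y A := by
  have hq : ∀ a, 0 < distOf p A a := by
    intro a
    obtain ⟨y₀⟩ := (inferInstance : Nonempty 𝒴)
    exact (hr y₀ a).trans_le
      (distOf_le p hp.1 (fun ω => (Y ω, A ω)) A Prod.snd (fun ω => rfl) (y₀, a))
  -- Gibbs inequality: every decision rule does at least as well as condEnt
  have gibbs : ∀ ψ : α → PDist 𝒴,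
      condEntOf p Y A ≤ ∑ ω, p ω * (-Real.log ((ψ (A ω)).1 (Y ω))) := by
    intro ψ
    have hL : ∑ ω, p ω * (-Real.log ((ψ (A ω)).1 (Y ω)))
        = ∑ v : 𝒴 × α, distOf p (fun ω => (Y ω, A ω)) v * (-Real.log ((ψ v.2).1 v.1)) :=
      (sum_distOf_mul p (fun ω => (Y ω, A ω)) (fun v => -Real.log ((ψ v.2).1 v.1))).symm
    have hR : condEntOf p Y A = ∑ v : 𝒴 × α, distOf p (fun ω => (Y ω, A ω)) v *
        (Real.log (distOf p A v.2) - Real.log (distOf p (fun ω => (Y ω, A ω)) v)) := by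
      rw [condEnt_eq_sum]
      exact (sum_distOf_mul p (fun ω => (Y ω, A ω))
        (fun v => Real.log (distOf p A v.2)
          - Real.log (distOf p (fun ω => (Y ω, A ω)) v))).symm
    rw [hL, hR]
    set r : 𝒴 × α → ℝ := fun v => distOf p (fun ω => (Y ω, A ω)) v with hrdef
    set c : 𝒴 × α → ℝ := fun v => (ψ v.2).1 v.1 * distOf p A v.2 with hcdef
    have hrpos : ∀ v, 0 < r v := fun v => by
      obtain ⟨y, a⟩ := v; exact hr y a
    have hcpos : ∀ v : 𝒴 × α, 0 < c v := fun v => mul_pos ((ψ v.2).2.1 v.1) (hq v.2)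
    have hcr : ∑ v : 𝒴 × α, c v = ∑ v : 𝒴 × α, r v := by
      rw [Fintype.sum_prod_type, Fintype.sum_prod_type,
        Finset.sum_comm (f := fun y a => c (y, a)), Finset.sum_comm (f := fun y a => r (y, a))]
      refine Finset.sum_congr rfl fun a _ => ?_
      have h1 : ∑ y, c (y, a) = distOf p A a := by
        simp only [hcdef]
        rw [← Finset.sum_mul, (ψ a).2.2, one_mul]
      have h2 : ∑ y, r (y, a) = distOf p A a := sum_distOf_pair p Y A a
      rw [h1, h2]
    have hstep : ∀ v : 𝒴 × α,
        r v * (Real.log (distOf p A v.2) - Real.log (r v))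
          ≤ r v * (-Real.log ((ψ v.2).1 v.1)) + (c v - r v) := by
      intro v
      have hlog : Real.log (c v / r v) ≤ c v / r v - 1 :=
        Real.log_le_sub_one_of_pos (div_pos (hcpos v) (hrpos v))
      have h1 : r v * Real.log (c v / r v) ≤ r v * (c v / r v - 1) :=
        mul_le_mul_of_nonneg_left hlog (hrpos v).le
      rw [Real.log_div (hcpos v).ne' (hrpos v).ne',
        Real.log_mul ((ψ v.2).2.1 v.1).ne' (hq v.2).ne'] at h1
      have h2 : r v * (c v / r v - 1) = c v - r v := by
        rw [mul_sub, mul_one, mul_div_cancel₀ _ (hrpos v).ne']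
      rw [h2] at h1
      nlinarith [h1]
    calc ∑ v : 𝒴 × α, r v * (Real.log (distOf p A v.2) - Real.log (r v))
        ≤ ∑ v : 𝒴 × α, (r v * (-Real.log ((ψ v.2).1 v.1)) + (c v - r v)) :=
          Finset.sum_le_sum fun v _ => hstep v
      _ = ∑ v : 𝒴 × α, r v * (-Real.log ((ψ v.2).1 v.1)) := by
          rw [Finset.sum_add_distrib, Finset.sum_sub_distrib, hcr, sub_self, add_zero]
  -- the optimal rule: the conditional distribution
  let ψstar : α → PDist 𝒴 := fun a =>
    ⟨fun y => distOf p (fun ω => (Y ω, A ω)) (y, a) / distOf p A a,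
      ⟨fun y => div_pos (hr y a) (hq a),
        by rw [← Finset.sum_div, sum_distOf_pair, div_self (hq a).ne']⟩⟩
  have hstar : ∑ ω, p ω * (-Real.log ((ψstar (A ω)).1 (Y ω))) = condEntOf p Y A := by
    rw [condEnt_eq_sum]
    refine Finset.sum_congr rfl fun ω _ => ?_
    congr 1
    show -Real.log (distOf p (fun ω => (Y ω, A ω)) (Y ω, A ω) / distOf p A (A ω)) = _
    rw [Real.log_div (hr (Y ω) (A ω)).ne' (hq (A ω)).ne']
    ring
  haveI : Nonempty (α → PDist 𝒴) := ⟨ψstar⟩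
  refine le_antisymm ?_ (le_ciInf gibbs)
  calc riskLog p Y A ≤ ∑ ω, p ω * (-Real.log ((ψstar (A ω)).1 (Y ω))) :=
        ciInf_le ⟨condEntOf p Y A, by rintro x ⟨ψ, rfl⟩; exact gibbs ψ⟩ ψstar
    _ = condEntOf p Y A := hstar
end Risk

/-- under the log-loss, the minimum excess risk
MER_log = R_log(Y|X,Z) − R_log(Y|X,W) = H(Y|X,Z) − H(Y|X,W) = I(Y;W|X,Z),
provided Y ⊥ Z | (X,W). -/
theorem mer_log_eq_cmi
    {Ω 𝒳 ζ 𝒲 𝒴 : Type*} [Fintype Ω] [Fintype 𝒳] [Fintype ζ] [Fintype 𝒲] [Fintype 𝒴]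
    [DecidableEq 𝒳] [DecidableEq ζ] [DecidableEq 𝒲] [DecidableEq 𝒴] [Nonempty 𝒴]
    (p : Ω → ℝ) (hp : IsPMF p)
    (X : Ω → 𝒳) (Z : Ω → ζ) (W : Ω → 𝒲) (Y : Ω → 𝒴)
    (hpos : ∀ v, 0 < distOf p (fun ω => (Y ω, X ω, Z ω, W ω)) v)
    (hci : CondIndep p Y Z (fun ω => (X ω, W ω))) :
    riskLog p Y (fun ω => (X ω, Z ω)) - riskLog p Y (fun ω => (X ω, W ω)) =
      condEntOf p Y (fun ω => (X ω, Z ω)) - condEntOf p Y (fun ω => (X ω, W ω)) ∧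
    condEntOf p Y (fun ω => (X ω, Z ω)) - condEntOf p Y (fun ω => (X ω, W ω)) =
      cmiOf p Y W (fun ω => (X ω, Z ω)) := by
  have hΩ : Nonempty Ω := by
    by_contra h
    rw [not_nonempty_iff] at h
    have h1 := hp.2
    rw [Finset.univ_eq_empty, Finset.sum_empty] at h1
    exact zero_ne_one h1
  obtain ⟨ω₀⟩ := hΩ
  have hp0 := hp.1
  have posXZ : ∀ y (a : 𝒳 × ζ), 0 < distOf p (fun ω => (Y ω, X ω, Z ω)) (y, a) := by
    rintro y ⟨x, z⟩
    exact (hpos (y, x, z, W ω₀)).trans_le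
      (distOf_le p hp0 _ _ (fun v => (v.1, v.2.1, v.2.2.1)) (fun ω => rfl) (y, x, z, W ω₀))
  have posXW : ∀ y x w, 0 < distOf p (fun ω => (Y ω, X ω, W ω)) (y, x, w) := by
    intro y x w
    exact (hpos (y, x, Z ω₀, w)).trans_le
      (distOf_le p hp0 _ _ (fun v => (v.1, v.2.1, v.2.2.2)) (fun ω => rfl) (y, x, Z ω₀, w))
  have posM : ∀ x w, 0 < distOf p (fun ω => (X ω, W ω)) (x, w) := by
    intro x w
    exact (hpos (Y ω₀, x, Z ω₀, w)).trans_le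
      (distOf_le p hp0 _ _ (fun v => (v.2.1, v.2.2.2)) (fun ω => rfl) (Y ω₀, x, Z ω₀, w))
  have posC : ∀ z x w, 0 < distOf p (fun ω => (Z ω, X ω, W ω)) (z, x, w) := by
    intro z x w
    exact (hpos (Y ω₀, x, z, w)).trans_le
      (distOf_le p hp0 _ _ (fun v => (v.2.2.1, v.2.1, v.2.2.2)) (fun ω => rfl) (Y ω₀, x, z, w))
  have posA : ∀ y z x w, 0 < distOf p (fun ω => (Y ω, Z ω, X ω, W ω)) (y, z, x, w) := by
    intro y z x w
    exact (hpos (y, x, z, w)).trans_le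
      (distOf_le p hp0 _ _ (fun v => (v.1, v.2.2.1, v.2.1, v.2.2.2)) (fun ω => rfl) (y, x, z, w))
  have hEq : condEntOf p Y (fun ω => (X ω, W ω))
      = condEntOf p Y (fun ω => (W ω, (X ω, Z ω))) := by
    rw [condEnt_eq_sum, condEnt_eq_sum]
    refine Finset.sum_congr rfl fun ω _ => ?_
    have e1 : distOf p (fun ω' => (W ω', (X ω', Z ω'))) (W ω, (X ω, Z ω))
        = distOf p (fun ω' => (Z ω', X ω', W ω')) (Z ω, X ω, W ω) :=
      distOf_congr p (fun ω' => by
        constructor <;> (intro h; simp only [Prod.mk.injEq] at h ⊢; tauto))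
    have e2 : distOf p (fun ω' => (Y ω', (W ω', (X ω', Z ω')))) (Y ω, (W ω, (X ω, Z ω)))
        = distOf p (fun ω' => (Y ω', Z ω', X ω', W ω')) (Y ω, Z ω, X ω, W ω) :=
      distOf_congr p (fun ω' => by
        constructor <;> (intro h; simp only [Prod.mk.injEq] at h ⊢; tauto))
    rw [e1, e2]
    have hci' := hci (Y ω) (Z ω) (X ω, W ω)
    have hA := posA (Y ω) (Z ω) (X ω) (W ω)
    have hM := posM (X ω) (W ω)
    have hB := posXW (Y ω) (X ω) (W ω)
    have hC := posC (Z ω) (X ω) (W ω)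
    have hlog := congrArg Real.log hci'
    rw [Real.log_mul hA.ne' hM.ne', Real.log_mul hB.ne' hC.ne'] at hlog
    have h3 : Real.log (distOf p (fun ω' => (X ω', W ω')) (X ω, W ω))
        - Real.log (distOf p (fun ω' => (Y ω', X ω', W ω')) (Y ω, X ω, W ω))
        = Real.log (distOf p (fun ω' => (Z ω', X ω', W ω')) (Z ω, X ω, W ω))
          - Real.log (distOf p (fun ω' => (Y ω', Z ω', X ω', W ω')) (Y ω, Z ω, X ω, W ω)) := by
      linarith
    rw [h3]
  constructor
  · rw [riskLog_eq_condEnt p hp Y (fun ω => (X ω, Z ω)) posXZ,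
      riskLog_eq_condEnt p hp Y (fun ω => (X ω, W ω))
        (by rintro y ⟨x, w⟩; exact posXW y x w)]
  · rw [cmiOf, hEq]
end

section
/- Let U be a random variable and Z_1, ..., Z_N, Z_{N+1} be conditionally i.i.d. given U. Then I(U; Z_1,...,Z_N) ≥ N · I(U; Z_{N+1} | Z_1,...,Z_N). -/
open scoped BigOperators

/-!
By the chain rule, `I(U; Z_{<N}) = ∑_{k<N} c_k` with `c_k = I(U; Z_k | Z_{<k})`, so it suffices
that `c_k` is antitone in `k`. Since `Z_k` and `Z_{<k}` are conditionally independent given `U`,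
`c_k = H(Z_k | Z_{<k}) - H(Z_k | U)`, and the last term does not depend on `k`. Conditioning
reduces entropy and `(Z_{k+1}, Z_{<k})` has the law of `(Z_k, Z_{<k})`, so
`H(Z_{k+1} | Z_{<k+1}) ≤ H(Z_{k+1} | Z_{<k}) = H(Z_k | Z_{<k})`.
-/

open Finset Real Function

section Distribution

variable {Ω α β : Type*} [Fintype Ω] [DecidableEq α] [DecidableEq β] {p : Ω → ℝ}

lemma sum_distOf [Fintype α] (X : Ω → α) : ∑ a, distOf p X a = ∑ ω, p ω := by
  simp only [distOf]
  rw [sum_comm]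
  simp

lemma distOf_nonneg (hp : ∀ ω, 0 ≤ p ω) (X : Ω → α) (a : α) : 0 ≤ distOf p X a :=
  sum_nonneg fun ω _ => by split_ifs <;> simp [hp ω]

lemma distOf_le_distOf (hp : ∀ ω, 0 ≤ p ω) {X : Ω → α} {Y : Ω → β} {a : α} {b : β}
    (h : ∀ ω, X ω = a → Y ω = b) : distOf p X a ≤ distOf p Y b :=
  sum_le_sum fun ω _ => by
    by_cases hX : X ω = a
    · simp [hX, h ω hX]
    · simp only [hX, if_false]
      split_ifs <;> simp [hp ω]

lemma distOf_comp_pos (hp : ∀ ω, 0 ≤ p ω) {X : Ω → α} {a : α} (g : α → β)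
    (h : 0 < distOf p X a) : 0 < distOf p (fun ω => g (X ω)) (g a) :=
  h.trans_le (distOf_le_distOf hp fun _ hω => by rw [hω])

lemma distOf_pair_eq_zero (hp : ∀ ω, 0 ≤ p ω) (X : Ω → α) {U : Ω → β} {u : β}
    (hu : distOf p U u = 0) (a : α) : distOf p (fun ω => (X ω, U ω)) (a, u) = 0 :=
  le_antisymm (hu ▸ distOf_le_distOf hp fun _ h => congrArg Prod.snd h) (distOf_nonneg hp _ _)

lemma distOf_comp [Fintype α] (X : Ω → α) (g : α → β) (b : β) :
    distOf p (fun ω => g (X ω)) b = ∑ a with g a = b, distOf p X a := by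
  simp only [distOf, sum_filter, ite_sum_zero]
  rw [sum_comm]
  refine sum_congr rfl fun ω _ => ?_
  rw [sum_eq_single (X ω) (fun a _ ha => by simp [Ne.symm ha]) (by simp)]
  simp

lemma distOf_eq_of_injective [Fintype α] {X : Ω → α} {Y : Ω → β} {e : α → β}
    (he : Injective e) (hY : ∀ ω, Y ω = e (X ω)) (a : α) :
    distOf p Y (e a) = distOf p X a := by
  simp [funext hY, distOf_comp, he.eq_iff, filter_eq']

lemma sum_distOf_pair_right [Fintype β] (X : Ω → α) (Y : Ω → β) (a : α) :
    ∑ b, distOf p (fun ω => (X ω, Y ω)) (a, b) = distOf p X a := by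
  simp only [distOf]
  rw [sum_comm]
  simp [ite_and]

lemma sum_distOf_pair_left [Fintype α] (X : Ω → α) (Y : Ω → β) (b : β) :
    ∑ a, distOf p (fun ω => (X ω, Y ω)) (a, b) = distOf p Y b := by
  simp only [distOf]
  rw [sum_comm]
  simp [ite_and]

lemma IdentDist.comp [Fintype α] {X Y : Ω → α} (h : IdentDist p X Y) (g : α → β) :
    IdentDist p (fun ω => g (X ω)) (fun ω => g (Y ω)) := fun b => by
  simp only [distOf_comp, h _]

/-- `P(X = a | U = u)`, with the junk value `0` where `P(U = u) = 0`. -/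
noncomputable def condDistOf (p : Ω → ℝ) (X : Ω → α) (U : Ω → β) (a : α) (u : β) : ℝ :=
  distOf p (fun ω => (X ω, U ω)) (a, u) / distOf p U u

lemma distOf_mul_condDistOf (hp : ∀ ω, 0 ≤ p ω) (X : Ω → α) (U : Ω → β) (a : α) (u : β) :
    distOf p U u * condDistOf p X U a u = distOf p (fun ω => (X ω, U ω)) (a, u) := by
  rcases eq_or_ne (distOf p U u) 0 with hu | hu
  · rw [hu, zero_mul, distOf_pair_eq_zero hp X hu]
  · exact mul_div_cancel₀ _ hu

end Distribution

section Entropy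

variable {Ω α β : Type*} [Fintype Ω] [Fintype α] [Fintype β] [DecidableEq α] [DecidableEq β]
  {p : Ω → ℝ}

lemma entOf_comp_eq_sum (X : Ω → α) (g : α → β) :
    entOf p (fun ω => g (X ω)) =
      -∑ a, distOf p X a * log (distOf p (fun ω => g (X ω)) (g a)) := by
  rw [entOf, neg_inj, ← sum_fiberwise univ g]
  refine sum_congr rfl fun b _ => ?_
  rw [sum_congr rfl fun a ha => by rw [(mem_filter.1 ha).2], ← sum_mul, ← distOf_comp]

lemma entOf_eq_of_injective {X : Ω → α} {Y : Ω → β} {e : α → β} (he : Injective e)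
    (hY : ∀ ω, Y ω = e (X ω)) : entOf p Y = entOf p X := by
  rw [funext hY, entOf_comp_eq_sum, entOf]
  simp only [distOf_eq_of_injective he (fun _ => rfl)]

lemma IdentDist.entOf_eq {X Y : Ω → α} (h : IdentDist p X Y) : entOf p X = entOf p Y := by
  simp only [entOf, h _]

lemma entOf_const (hp : IsPMF p) (x : α) : entOf p (fun _ => x) = 0 := by
  simp [entOf, distOf, apply_ite, hp.2]

end Entropy

lemma sub_le_mul_log_div {x y : ℝ} (hx : 0 ≤ x) (hy : 0 ≤ y) (hxy : 0 < x → 0 < y) :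
    x - y ≤ x * log (x / y) := by
  rcases hx.eq_or_lt with rfl | hx
  · simpa using hy
  · have hlog := one_sub_inv_le_log_of_pos (div_pos hx (hxy hx))
    rw [inv_div] at hlog
    calc x - y = x * (1 - y / x) := by field_simp
      _ ≤ x * log (x / y) := mul_le_mul_of_nonneg_left hlog hx.le

lemma sum_mul_log_div_nonneg {ι : Type*} (s : Finset ι) {P Q : ι → ℝ}
    (hP : ∀ i ∈ s, 0 ≤ P i) (hQ : ∀ i ∈ s, 0 ≤ Q i) (hPQ : ∀ i ∈ s, 0 < P i → 0 < Q i)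
    (hsum : ∑ i ∈ s, Q i ≤ ∑ i ∈ s, P i) : 0 ≤ ∑ i ∈ s, P i * log (P i / Q i) :=
  calc 0 ≤ ∑ i ∈ s, (P i - Q i) := by rw [sum_sub_distrib]; linarith
    _ ≤ _ := sum_le_sum fun i hi => sub_le_mul_log_div (hP i hi) (hQ i hi) (hPQ i hi)

section ConditionalMutualInformation

variable {Ω α β γ δ : Type*} [Fintype Ω] [Fintype α] [Fintype β] [Fintype γ] [Fintype δ]
  [DecidableEq α] [DecidableEq β] [DecidableEq γ] [DecidableEq δ] {p : Ω → ℝ}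

/-- `P(A = a | C = c) P(B = b | C = c) P(C = c)`: `I(A; B | C)` is the relative entropy of the
law of `(A, B, C)` with respect to this measure. -/
noncomputable def condProdDistOf (p : Ω → ℝ) (A : Ω → α) (B : Ω → β) (C : Ω → γ)
    (t : α × β × γ) : ℝ :=
  distOf p (fun ω => (A ω, C ω)) (t.1, t.2.2) * distOf p (fun ω => (B ω, C ω)) t.2 /
    distOf p C t.2.2

lemma sum_condProdDistOf (A : Ω → α) (B : Ω → β) (C : Ω → γ) :
    ∑ t, condProdDistOf p A B C t = ∑ ω, p ω :=
  calc ∑ t, condProdDistOf p A B C t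
      = ∑ c, (∑ a, distOf p (fun ω => (A ω, C ω)) (a, c)) *
          (∑ b, distOf p (fun ω => (B ω, C ω)) (b, c)) / distOf p C c := by
        simp only [condProdDistOf, Fintype.sum_prod_type, sum_mul, mul_sum, sum_div]
        rw [sum_comm, sum_congr rfl fun _ _ => sum_comm, sum_comm]
    _ = ∑ ω, p ω := by simp only [sum_distOf_pair_left, mul_self_div_self, sum_distOf]

lemma cmiOf_eq_sum_mul_log_div (hp : ∀ ω, 0 ≤ p ω) (A : Ω → α) (B : Ω → β) (C : Ω → γ) :
    cmiOf p A B C = ∑ t, distOf p (fun ω => (A ω, B ω, C ω)) t *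
      log (distOf p (fun ω => (A ω, B ω, C ω)) t / condProdDistOf p A B C t) := by
  have hAC : entOf p (fun ω => (A ω, C ω)) = -∑ t, distOf p (fun ω => (A ω, B ω, C ω)) t *
      log (distOf p (fun ω => (A ω, C ω)) (t.1, t.2.2)) :=
    entOf_comp_eq_sum (fun ω => (A ω, B ω, C ω)) fun t => (t.1, t.2.2)
  have hC : entOf p C = -∑ t, distOf p (fun ω => (A ω, B ω, C ω)) t *
      log (distOf p C t.2.2) :=
    entOf_comp_eq_sum (fun ω => (A ω, B ω, C ω)) fun t => t.2.2
  have hBC : entOf p (fun ω => (B ω, C ω)) = -∑ t, distOf p (fun ω => (A ω, B ω, C ω)) t *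
      log (distOf p (fun ω => (B ω, C ω)) t.2) :=
    entOf_comp_eq_sum (fun ω => (A ω, B ω, C ω)) fun t => t.2
  rw [cmiOf, condEntOf, condEntOf, hAC, hC, hBC, entOf, ← sub_eq_zero]
  simp only [← sum_neg_distrib, ← sum_sub_distrib]
  refine sum_eq_zero fun t _ => ?_
  rcases (distOf_nonneg hp (fun ω => (A ω, B ω, C ω)) t).eq_or_lt with hP | hP
  · simp [← hP]
  have hAC : distOf p (fun ω => (A ω, C ω)) (t.1, t.2.2) ≠ 0 :=
    (distOf_comp_pos hp (fun t => (t.1, t.2.2)) hP).ne'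
  have hBC : distOf p (fun ω => (B ω, C ω)) t.2 ≠ 0 := (distOf_comp_pos hp (·.2) hP).ne'
  have hC : distOf p C t.2.2 ≠ 0 := (distOf_comp_pos hp (·.2.2) hP).ne'
  rw [condProdDistOf, log_div hP.ne' (div_ne_zero (mul_ne_zero hAC hBC) hC),
    log_div (mul_ne_zero hAC hBC) hC, log_mul hAC hBC]
  ring

lemma cmiOf_nonneg (hp : ∀ ω, 0 ≤ p ω) (A : Ω → α) (B : Ω → β) (C : Ω → γ) :
    0 ≤ cmiOf p A B C := by
  rw [cmiOf_eq_sum_mul_log_div hp]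
  refine sum_mul_log_div_nonneg _ (fun t _ => distOf_nonneg hp _ t)
    (fun t _ => div_nonneg (mul_nonneg (distOf_nonneg hp _ _) (distOf_nonneg hp _ _))
      (distOf_nonneg hp _ _)) (fun t _ hP => ?_) (by rw [sum_condProdDistOf, sum_distOf])
  exact div_pos (mul_pos (distOf_comp_pos hp (fun t => (t.1, t.2.2)) hP)
    (distOf_comp_pos hp (·.2) hP)) (distOf_comp_pos hp (·.2.2) hP)

lemma CondIndep.cmiOf_eq_zero {A : Ω → α} {B : Ω → β} {C : Ω → γ} (hp : ∀ ω, 0 ≤ p ω)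
    (h : CondIndep p A B C) : cmiOf p A B C = 0 := by
  rw [cmiOf_eq_sum_mul_log_div hp]
  refine sum_eq_zero fun t _ => ?_
  rcases (distOf_nonneg hp (fun ω => (A ω, B ω, C ω)) t).eq_or_lt with hP | hP
  · simp [← hP]
  have hC : distOf p C t.2.2 ≠ 0 := (distOf_comp_pos hp (·.2.2) hP).ne'
  rw [condProdDistOf, ← h t.1 t.2.1 t.2.2, mul_div_cancel_right₀ _ hC, div_self hP.ne', log_one,
    mul_zero]

lemma condEntOf_le_condEntOf_comp (hp : ∀ ω, 0 ≤ p ω) (A : Ω → α) (Y : Ω → β) (g : β → γ) :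
    condEntOf p A Y ≤ condEntOf p A (fun ω => g (Y ω)) := by
  have hY : condEntOf p A (fun ω => (Y ω, g (Y ω))) = condEntOf p A Y := by
    rw [condEntOf, condEntOf,
      entOf_eq_of_injective (e := fun y => (y, g y)) (fun _ _ h => (Prod.mk.inj h).1)
        fun _ => rfl,
      entOf_eq_of_injective (X := fun ω => (A ω, Y ω)) (e := fun x => (x.1, x.2, g x.2))
        (fun _ _ h => Prod.ext (Prod.mk.inj h).1 (Prod.mk.inj (Prod.mk.inj h).2).1) fun _ => rfl]
  have := cmiOf_nonneg hp A Y fun ω => g (Y ω)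
  rw [cmiOf, hY] at this
  linarith

lemma CondIndep.cmiOf_eq {A : Ω → α} {C : Ω → γ} {U : Ω → δ} (hp : ∀ ω, 0 ≤ p ω)
    (h : CondIndep p A C U) : cmiOf p U A C = condEntOf p A C - condEntOf p A U := by
  have h0 := h.cmiOf_eq_zero hp
  have hUC : entOf p (fun ω => (U ω, C ω)) = entOf p (fun ω => (C ω, U ω)) :=
    entOf_eq_of_injective Prod.swap_injective fun _ => rfl
  have hUAC : entOf p (fun ω => (U ω, A ω, C ω)) = entOf p (fun ω => (A ω, C ω, U ω)) :=
    entOf_eq_of_injective (X := fun ω => (A ω, C ω, U ω)) (e := fun x => (x.2.2, x.1, x.2.1))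
      (fun _ _ h => Prod.ext (congrArg (·.2.1) h) (Prod.ext (congrArg (·.2.2) h)
        (congrArg Prod.fst h))) fun _ => rfl
  simp only [cmiOf, condEntOf] at h0 ⊢
  linarith

lemma cmiOf_le_cmiOf_of_condIndep (hp : ∀ ω, 0 ≤ p ω) {A B : Ω → α} {X : Ω → β}
    {Y : Ω → γ} {U : Ω → δ} {g : γ → β} (hA : CondIndep p A X U) (hB : CondIndep p B Y U)
    (hXY : ∀ ω, X ω = g (Y ω))
    (hAB : IdentDist p (fun ω => (B ω, X ω, U ω)) (fun ω => (A ω, X ω, U ω))) :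
    cmiOf p U B Y ≤ cmiOf p U A X := by
  have hBU := (hAB.comp fun t => (t.1, t.2.2)).entOf_eq
  have hBX := (hAB.comp fun t => (t.1, t.2.1)).entOf_eq
  have hle := condEntOf_le_condEntOf_comp hp B Y g
  rw [← funext hXY] at hle
  rw [hA.cmiOf_eq hp, hB.cmiOf_eq hp]
  simp only [condEntOf] at hBU hBX hle ⊢
  linarith

lemma miOf_eq_of_injective (U : Ω → γ) {X : Ω → α} {Y : Ω → β} {e : α → β}
    (he : Injective e) (hY : ∀ ω, Y ω = e (X ω)) : miOf p U Y = miOf p U X := by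
  rw [miOf, miOf, entOf_eq_of_injective he hY,
    entOf_eq_of_injective (X := fun ω => (U ω, X ω)) (e := Prod.map id e)
      (injective_id.prodMap he) fun ω => by simp [hY]]

lemma miOf_pair_eq_add_cmiOf (U : Ω → γ) (A : Ω → α) (X : Ω → β) :
    miOf p U (fun ω => (A ω, X ω)) = miOf p U X + cmiOf p U A X := by
  simp only [miOf, cmiOf, condEntOf]
  ring

lemma miOf_const (hp : IsPMF p) (U : Ω → β) (x : α) : miOf p U (fun _ => x) = 0 := by
  rw [miOf, entOf_const hp,
    entOf_eq_of_injective (e := fun u => (u, x)) (fun _ _ h => (Prod.mk.inj h).1) fun _ => rfl]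
  ring

end ConditionalMutualInformation

section InitialSegment

variable {Ω 𝒵 : Type*}

def initSeg (Z : ℕ → Ω → 𝒵) (n : ℕ) (ω : Ω) : Fin n → 𝒵 := fun i => Z i ω

lemma initSeg_succ (Z : ℕ → Ω → 𝒵) (n : ℕ) (ω : Ω) :
    initSeg Z (n + 1) ω = Fin.snoc (initSeg Z n ω) (Z n ω) := by
  funext i
  refine Fin.lastCases ?_ (fun j => ?_) i <;> simp [initSeg]

lemma snoc_swap_injective (n : ℕ) :
    Injective fun x : 𝒵 × (Fin n → 𝒵) => (Fin.snoc x.2 x.1 : Fin (n + 1) → 𝒵) :=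
  (Fin.snoc_injective2 (α := fun _ => 𝒵)).uncurry.comp Prod.swap_injective

end InitialSegment

section ConditionallyIID

variable {Ω 𝒵 𝒰 : Type*} [Fintype Ω] [DecidableEq 𝒵] [DecidableEq 𝒰]
  {p : Ω → ℝ} {Z : ℕ → Ω → 𝒵} {U : Ω → 𝒰}

/-- `P(Z_{<n} = f, U = u) = P(U = u) ∏ᵢ P(Z_0 = fᵢ | U = u)`, multiplied through by
`P(U = u) ^ n` so that no division occurs. -/
def CondIID (p : Ω → ℝ) (Z : ℕ → Ω → 𝒵) (U : Ω → 𝒰) : Prop :=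
  ∀ (n : ℕ) (f : Fin n → 𝒵) (u : 𝒰),
    distOf p (fun ω => (initSeg Z n ω, U ω)) (f, u) * distOf p U u ^ n =
      distOf p U u * ∏ i : Fin n, distOf p (fun ω => (Z 0 ω, U ω)) (f i, u)

lemma CondIID.distOf_initSeg (hZ : CondIID p Z U) (hp : ∀ ω, 0 ≤ p ω) (n : ℕ)
    (f : Fin n → 𝒵) (u : 𝒰) :
    distOf p (fun ω => (initSeg Z n ω, U ω)) (f, u) =
      distOf p U u * ∏ i, condDistOf p (Z 0) U (f i) u := by
  rcases eq_or_ne (distOf p U u) 0 with hu | hu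
  · rw [hu, zero_mul, distOf_pair_eq_zero hp _ hu]
  · simp only [condDistOf]
    rw [prod_div_distrib, prod_const, card_univ, Fintype.card_fin, mul_div_assoc',
      eq_div_iff (pow_ne_zero _ hu)]
    exact hZ n f u

variable [Fintype 𝒵] [Fintype 𝒰]

lemma miOf_initSeg_eq_sum (hp : IsPMF p) (n : ℕ) :
    miOf p U (initSeg Z n) = ∑ k ∈ range n, cmiOf p U (Z k) (initSeg Z k) := by
  induction n with
  | zero =>
    rw [sum_range_zero, show initSeg Z 0 = fun _ => ![] from funext fun _ => Subsingleton.elim _ _,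
      miOf_const hp]
  | succ n ih =>
    rw [sum_range_succ, ← ih, ← miOf_pair_eq_add_cmiOf]
    exact miOf_eq_of_injective U (snoc_swap_injective n) (initSeg_succ Z n)

namespace CondIID

lemma distOf_self_initSeg (hZ : CondIID p Z U) (hp : ∀ ω, 0 ≤ p ω) (k : ℕ) (z : 𝒵)
    (f : Fin k → 𝒵) (u : 𝒰) :
    distOf p (fun ω => (Z k ω, initSeg Z k ω, U ω)) (z, f, u) =
      distOf p U u * (∏ i, condDistOf p (Z 0) U (f i) u) * condDistOf p (Z 0) U z u := by
  have he : Injective fun x : 𝒵 × (Fin k → 𝒵) × 𝒰 =>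
      (Fin.snoc (α := fun _ => 𝒵) x.2.1 x.1, x.2.2) := by
    rintro ⟨z, f, u⟩ ⟨z', f', u'⟩ h
    simp_all [Fin.snoc_inj]
  rw [← distOf_eq_of_injective (Y := fun ω => (initSeg Z (k + 1) ω, U ω)) he
    (fun ω => by rw [initSeg_succ]), hZ.distOf_initSeg hp, Fin.prod_univ_castSucc]
  simp only [Fin.snoc_castSucc, Fin.snoc_last, mul_assoc]

lemma distOf_succ_initSeg (hZ : CondIID p Z U) (hp : ∀ ω, 0 ≤ p ω) (k : ℕ) (z : 𝒵)
    (f : Fin k → 𝒵) (u : 𝒰) :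
    distOf p (fun ω => (Z (k + 1) ω, initSeg Z k ω, U ω)) (z, f, u) =
      distOf p U u * (∏ i, condDistOf p (Z 0) U (f i) u) * condDistOf p (Z 0) U z u := by
  have he : Injective fun x : (𝒵 × (Fin k → 𝒵) × 𝒰) × 𝒵 =>
      (x.1.1, Fin.snoc (α := fun _ => 𝒵) x.1.2.1 x.2, x.1.2.2) := by
    rintro ⟨⟨z, f, u⟩, z'⟩ ⟨⟨z₁, f₁, u₁⟩, z₁'⟩ h
    simp_all [Fin.snoc_inj]
  have hrelabel (z' : 𝒵) :
      distOf p (fun ω => ((Z (k + 1) ω, initSeg Z k ω, U ω), Z k ω)) ((z, f, u), z') =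
        distOf p (fun ω => (Z (k + 1) ω, initSeg Z (k + 1) ω, U ω)) (z, Fin.snoc f z', u) :=
    (distOf_eq_of_injective he (fun ω => by rw [initSeg_succ]) _).symm
  rw [← sum_distOf_pair_right _ (Z k)]
  simp only [hrelabel, hZ.distOf_self_initSeg hp, Fin.prod_univ_castSucc, Fin.snoc_castSucc,
    Fin.snoc_last]
  calc ∑ z', distOf p U u * ((∏ i, condDistOf p (Z 0) U (f i) u) * condDistOf p (Z 0) U z' u) *
        condDistOf p (Z 0) U z u
      = (∑ z', distOf p U u * condDistOf p (Z 0) U z' u) *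
          (∏ i, condDistOf p (Z 0) U (f i) u) * condDistOf p (Z 0) U z u := by
        rw [sum_mul, sum_mul]
        exact sum_congr rfl fun _ _ => by ring
    _ = _ := by simp only [distOf_mul_condDistOf hp, sum_distOf_pair_left]

lemma identDist_succ (hZ : CondIID p Z U) (hp : ∀ ω, 0 ≤ p ω) (k : ℕ) :
    IdentDist p (fun ω => (Z (k + 1) ω, initSeg Z k ω, U ω))
      (fun ω => (Z k ω, initSeg Z k ω, U ω)) := fun ⟨z, f, u⟩ => by
  rw [hZ.distOf_succ_initSeg hp, hZ.distOf_self_initSeg hp]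

lemma identDist_zero (hZ : CondIID p Z U) (hp : ∀ ω, 0 ≤ p ω) (k : ℕ) :
    IdentDist p (fun ω => (Z k ω, U ω)) (fun ω => (Z 0 ω, U ω)) := by
  induction k with
  | zero => exact fun _ => rfl
  | succ k ih =>
    exact fun a => (((hZ.identDist_succ hp k).comp fun t => (t.1, t.2.2)) a).trans (ih a)

lemma condIndep_initSeg (hZ : CondIID p Z U) (hp : ∀ ω, 0 ≤ p ω) (k : ℕ) :
    CondIndep p (Z k) (initSeg Z k) U := fun z f u => by
  rw [hZ.distOf_self_initSeg hp, hZ.distOf_initSeg hp, hZ.identDist_zero hp k (z, u),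
    ← distOf_mul_condDistOf hp (Z 0) U z u]
  ring

lemma antitone_cmiOf (hZ : CondIID p Z U) (hp : ∀ ω, 0 ≤ p ω) :
    Antitone fun k => cmiOf p U (Z k) (initSeg Z k) :=
  antitone_nat_of_succ_le fun k =>
    cmiOf_le_cmiOf_of_condIndep hp (hZ.condIndep_initSeg hp k) (hZ.condIndep_initSeg hp (k + 1))
      (g := Fin.init) (fun _ => rfl) (hZ.identDist_succ hp k)

end CondIID

end ConditionallyIID

/-- if Z_0, Z_1, ... are conditionally i.i.d. given U, then
I(U; Z_0,...,Z_{N-1}) ≥ N · I(U; Z_N | Z_0,...,Z_{N-1}). -/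
theorem mi_ge_N_mul_cmi
    {Ω 𝒵 𝒰 : Type*} [Fintype Ω] [Fintype 𝒵] [Fintype 𝒰]
    [DecidableEq 𝒵] [DecidableEq 𝒰]
    (p : Ω → ℝ) (hp : IsPMF p) (N : ℕ)
    (Z : ℕ → Ω → 𝒵) (U : Ω → 𝒰)
    (hiid : ∀ (n : ℕ) (f : Fin n → 𝒵) (u : 𝒰),
      distOf p (fun ω => ((fun i : Fin n => Z i.val ω), U ω)) (f, u) * distOf p U u ^ n =
        distOf p U u * ∏ i : Fin n, distOf p (fun ω => (Z 0 ω, U ω)) (f i, u)) :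
    (N : ℝ) * cmiOf p U (Z N) (fun ω => (fun i : Fin N => Z i.val ω)) ≤
      miOf p U (fun ω => (fun i : Fin N => Z i.val ω)) := by
  have hZ : CondIID p Z U := hiid
  calc (N : ℝ) * cmiOf p U (Z N) (initSeg Z N)
      = ∑ _k ∈ range N, cmiOf p U (Z N) (initSeg Z N) := by simp
    _ ≤ ∑ k ∈ range N, cmiOf p U (Z k) (initSeg Z k) :=
      sum_le_sum fun k hk => hZ.antitone_cmiOf hp.1 (mem_range.1 hk).le
    _ = miOf p U (initSeg Z N) := (miOf_initSeg_eq_sum hp N).symm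
end
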